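/- The sequence B_n·B_{n+1} modulo 100 is periodic with period 60, and B_n·B_{n+1} is never ≡ 66 (mod 100). -/
import Mathlib


def B : ℕ → ℕ
  | 0 => 0
  | 1 => 1
  | n + 2 => 6 * B (n + 1) - B n

lemma Bmono : ∀ n, B n ≤ B (n + 1) := by
  intro n
  induction n using Nat.twoStepInduction with
  | zero => simp [B]
  | one => simp [B]
  | more n ih1 ih2 =>
    show B (n+2) ≤ 6 * B (n+2) - B (n+1)
    have h : B (n+1) ≤ B (n+2) := ih2
    omega

lemma Ble : ∀ n, B n ≤ 6 * B (n + 1) := fun n =>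
  le_trans (Bmono n) (by omega)

lemma Bcast (n : ℕ) : (B (n + 2) : ZMod 100) = 6 * B (n + 1) - B n := by
  show ((6 * B (n + 1) - B n : ℕ) : ZMod 100) = _
  rw [Nat.cast_sub (Ble n)]
  push_cast
  ring

def p : ℕ → ZMod 100 × ZMod 100
  | 0 => (0, 1)
  | n + 1 => ((p n).2, 6 * (p n).2 - (p n).1)

lemma hp : ∀ n, p n = ((B n : ZMod 100), (B (n + 1) : ZMod 100)) := by
  intro n
  induction n with
  | zero => simp [p, B]
  | succ n ih =>
    rw [p, ih, Bcast]

lemma pstep (n : ℕ) : p (n + 1) = ((p n).2, 6 * (p n).2 - (p n).1) := rfl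

set_option maxRecDepth 10000 in
lemma hper : ∀ n, p (n + 60) = p n := by
  intro n
  induction n with
  | zero => decide
  | succ n ih =>
    show p ((n + 60) + 1) = p (n + 1)
    rw [pstep (n + 60), pstep n, ih]

lemma hperk : ∀ k r, p (r + 60 * k) = p r := by
  intro k
  induction k with
  | zero => simp
  | succ k ih =>
    intro r
    have : r + 60 * (k + 1) = (r + 60 * k) + 60 := by ring
    rw [this, hper, ih]


lemma hB1 (n : ℕ) : (p n).1 = (B n : ZMod 100) := congrArg Prod.fst (hp n)
lemma hB2 (n : ℕ) : (p n).2 = (B (n + 1) : ZMod 100) := congrArg Prod.snd (hp n)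

lemma hBper1 (n : ℕ) : (B (n + 60) : ZMod 100) = (B n : ZMod 100) := by
  rw [← hB1, ← hB1, hper]

lemma hBper2 (n : ℕ) : (B (n + 61) : ZMod 100) = (B (n + 1) : ZMod 100) := by
  have : n + 61 = (n + 60) + 1 := by ring
  rw [this, ← hB2, ← hB2, hper]

set_option maxRecDepth 40000 in
lemma key : ∀ r < 60, (p r).1 * (p r).2 ≠ (66 : ZMod 100) := by decide

theorem stmt18 :
    (∀ n, B (n + 60) * B (n + 61) % 100 = B n * B (n + 1) % 100) ∧
    (∀ n, B n * B (n + 1) % 100 ≠ 66) := by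
  constructor
  · intro n
    have : ((B (n + 60) * B (n + 61) : ℕ) : ZMod 100) = ((B n * B (n + 1) : ℕ) : ZMod 100) := by
      push_cast
      rw [hBper1, hBper2]
    exact (ZMod.natCast_eq_natCast_iff _ _ _).mp this
  · intro n h
    have hn : n = n % 60 + 60 * (n / 60) := (Nat.mod_add_div n 60).symm
    have hpn : p n = p (n % 60) := by
      conv_lhs => rw [hn]
      exact hperk _ _
    have hc : ((B n * B (n + 1) : ℕ) : ZMod 100) = ((66 : ℕ) : ZMod 100) := by
      apply (ZMod.natCast_eq_natCast_iff _ _ _).mpr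
      unfold Nat.ModEq
      omega
    have hr : (p (n % 60)).1 * (p (n % 60)).2 = (66 : ZMod 100) := by
      rw [← hpn, hB1, hB2]
      push_cast at hc
      exact hc
    exact key (n % 60) (Nat.mod_lt _ (by norm_num)) hr
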